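/- (Corollaries 3.9 and 3.10: homothetic and isometric invariance of the tangential component.) In the setting of Theorem 3.8 with constant dilation factor δ ≡ c (c a nonzero real constant), for any a, b ∈ ℝ one has σ̃·(aΦ̃_u + bΦ̃_v) = c²·σ·(aΦ_u + bΦ_v) along the curve; in particular for c = 1 (isometry) the tangential component is invariant: σ̃·(aΦ̃_u + bΦ̃_v) = σ·(aΦ_u + bΦ_v). -/

import Mathlib

noncomputable section
open Matrix

/-- Partial derivative in the first (`u`) direction. -/
def pu {E : Type*} [NormedAddCommGroup E] [NormedSpace ℝ E] (f : ℝ × ℝ → E) (p : ℝ × ℝ) : E :=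
  fderiv ℝ f p (1, 0)

/-- Partial derivative in the second (`v`) direction. -/
def pv {E : Type*} [NormedAddCommGroup E] [NormedSpace ℝ E] (f : ℝ × ℝ → E) (p : ℝ × ℝ) : E :=
  fderiv ℝ f p (0, 1)

/-- Euclidean norm on `Fin 3 → ℝ`. -/
def enorm3 (x : Fin 3 → ℝ) : ℝ := Real.sqrt (x ⬝ᵥ x)

section Aux

variable {W : Type*} [NormedAddCommGroup W] [NormedSpace ℝ W]

lemma contDiff_pu {f : ℝ × ℝ → W} (hf : ContDiff ℝ (⊤ : ℕ∞) f) : ContDiff ℝ (⊤ : ℕ∞) (pu f) :=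
  (hf.fderiv_right (by simp)).clm_apply contDiff_const

lemma contDiff_pv {f : ℝ × ℝ → W} (hf : ContDiff ℝ (⊤ : ℕ∞) f) : ContDiff ℝ (⊤ : ℕ∞) (pv f) :=
  (hf.fderiv_right (by simp)).clm_apply contDiff_const

lemma fderiv_fderiv_apply {f : ℝ × ℝ → W} (hf : ContDiff ℝ (⊤ : ℕ∞) f) (p z w : ℝ × ℝ) :
    fderiv ℝ (fun q => fderiv ℝ f q w) p z = (fderiv ℝ (fderiv ℝ f) p z) w := by
  have h : HasFDerivAt (fderiv ℝ f) (fderiv ℝ (fderiv ℝ f) p) p :=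
    (((hf.fderiv_right (m := 1) (by exact WithTop.coe_le_coe.mpr le_top)).differentiable one_ne_zero) p).hasFDerivAt
  have h2 := h.clm_apply (hasFDerivAt_const w p)
  rw [h2.fderiv]
  simp

lemma clairaut {f : ℝ × ℝ → W} (hf : ContDiff ℝ (⊤ : ℕ∞) f) (p : ℝ × ℝ) :
    pu (pv f) p = pv (pu f) p := by
  show fderiv ℝ (fun q => fderiv ℝ f q (0,1)) p (1,0)
      = fderiv ℝ (fun q => fderiv ℝ f q (1,0)) p (0,1)
  rw [fderiv_fderiv_apply hf, fderiv_fderiv_apply hf]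
  exact second_derivative_symmetric (fun y => ((hf.differentiable (by simp)) y).hasFDerivAt)
    (((hf.fderiv_right (m := 1) (by exact WithTop.coe_le_coe.mpr le_top)).differentiable one_ne_zero p).hasFDerivAt) _ _

lemma hasDerivAt_comp2 {f : ℝ × ℝ → W} (hf : Differentiable ℝ f) {u v : ℝ → ℝ}
    (hu : DifferentiableAt ℝ u s) (hv : DifferentiableAt ℝ v s) :
    HasDerivAt (fun t => f (u t, v t))
      (deriv u s • pu f (u s, v s) + deriv v s • pv f (u s, v s)) s := by
  have hγ : HasDerivAt (fun t => (u t, v t)) (deriv u s, deriv v s) s :=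
    hu.hasDerivAt.prodMk hv.hasDerivAt
  have h1 := (hf (u s, v s)).hasFDerivAt.comp_hasDerivAt s hγ
  convert h1 using 1
  · rfl
  have : (deriv u s, deriv v s) = deriv u s • ((1:ℝ), (0:ℝ)) + deriv v s • ((0:ℝ), (1:ℝ)) := by
    simp
  rw [this, map_add, _root_.map_smul, _root_.map_smul]
  rfl

end Aux

lemma hasFDerivAt_dot {f g : ℝ × ℝ → Fin 3 → ℝ} {p : ℝ × ℝ}
    (hf : DifferentiableAt ℝ f p) (hg : DifferentiableAt ℝ g p) :
    HasFDerivAt (fun q => f q ⬝ᵥ g q)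
      (∑ i : Fin 3, (f p i • ((ContinuousLinearMap.proj i).comp (fderiv ℝ g p)) +
        g p i • ((ContinuousLinearMap.proj i).comp (fderiv ℝ f p)))) p := by
  have hfi : ∀ i : Fin 3, HasFDerivAt (fun q => f q i)
      ((ContinuousLinearMap.proj i).comp (fderiv ℝ f p)) p := fun i =>
    (ContinuousLinearMap.proj (R := ℝ) (φ := fun _ : Fin 3 => ℝ) i).hasFDerivAt.comp p hf.hasFDerivAt
  have hgi : ∀ i : Fin 3, HasFDerivAt (fun q => g q i)
      ((ContinuousLinearMap.proj i).comp (fderiv ℝ g p)) p := fun i =>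
    (ContinuousLinearMap.proj (R := ℝ) (φ := fun _ : Fin 3 => ℝ) i).hasFDerivAt.comp p hg.hasFDerivAt
  have := HasFDerivAt.fun_sum (fun i (_ : i ∈ Finset.univ) => (hfi i).mul (hgi i))
  simpa [dotProduct] using this

lemma differentiable_dot {f g : ℝ × ℝ → Fin 3 → ℝ}
    (hf : Differentiable ℝ f) (hg : Differentiable ℝ g) :
    Differentiable ℝ (fun q => f q ⬝ᵥ g q) := fun p =>
  (hasFDerivAt_dot (hf p) (hg p)).differentiableAt

lemma fderiv_dot_apply {f g : ℝ × ℝ → Fin 3 → ℝ} {p : ℝ × ℝ}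
    (hf : DifferentiableAt ℝ f p) (hg : DifferentiableAt ℝ g p) (z : ℝ × ℝ) :
    fderiv ℝ (fun q => f q ⬝ᵥ g q) p z = (fderiv ℝ f p z) ⬝ᵥ g p + f p ⬝ᵥ (fderiv ℝ g p z) := by
  rw [(hasFDerivAt_dot hf hg).fderiv]
  simp [dotProduct, Finset.sum_add_distrib, mul_comm]
  ring

lemma pu_dot {f g : ℝ × ℝ → Fin 3 → ℝ} (hf : Differentiable ℝ f) (hg : Differentiable ℝ g)
    (p : ℝ × ℝ) :
    pu (fun q => f q ⬝ᵥ g q) p = pu f p ⬝ᵥ g p + f p ⬝ᵥ pu g p :=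
  fderiv_dot_apply (hf p) (hg p) _

lemma pv_dot {f g : ℝ × ℝ → Fin 3 → ℝ} (hf : Differentiable ℝ f) (hg : Differentiable ℝ g)
    (p : ℝ × ℝ) :
    pv (fun q => f q ⬝ᵥ g q) p = pv f p ⬝ᵥ g p + f p ⬝ᵥ pv g p :=
  fderiv_dot_apply (hf p) (hg p) _

lemma pu_const_mul {f : ℝ × ℝ → ℝ} {p : ℝ × ℝ} (hf : DifferentiableAt ℝ f p) (k : ℝ) :
    pu (fun q => k * f q) p = k * pu f p := by
  show fderiv ℝ (fun q => k * f q) p (1,0) = k * fderiv ℝ f p (1,0)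
  rw [fderiv_const_mul hf k]; rfl

lemma pv_const_mul {f : ℝ × ℝ → ℝ} {p : ℝ × ℝ} (hf : DifferentiableAt ℝ f p) (k : ℝ) :
    pv (fun q => k * f q) p = k * pv f p := by
  show fderiv ℝ (fun q => k * f q) p (0,1) = k * fderiv ℝ f p (0,1)
  rw [fderiv_const_mul hf k]; rfl

/-- Key expansion: the tangential component in terms of the first fundamental form
and its partial derivatives. -/
lemma key_expand (Φ : ℝ × ℝ → Fin 3 → ℝ) (hΦ : ContDiff ℝ (⊤ : ℕ∞) Φ) (p : ℝ × ℝ)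
    (xi m u1 v1 u2 v2 a b : ℝ) :
    (xi • (u1 • pu Φ p + v1 • pv Φ p) +
      m • (u2 • pu Φ p + v2 • pv Φ p + u1 ^ 2 • pu (pu Φ) p +
        (2 * u1 * v1) • pv (pu Φ) p + v1 ^ 2 • pv (pv Φ) p)) ⬝ᵥ (a • pu Φ p + b • pv Φ p)
    = xi * (u1 * (a * (pu Φ p ⬝ᵥ pu Φ p) + b * (pu Φ p ⬝ᵥ pv Φ p))
          + v1 * (a * (pu Φ p ⬝ᵥ pv Φ p) + b * (pv Φ p ⬝ᵥ pv Φ p)))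
      + m * (u2 * (a * (pu Φ p ⬝ᵥ pu Φ p) + b * (pu Φ p ⬝ᵥ pv Φ p))
           + v2 * (a * (pu Φ p ⬝ᵥ pv Φ p) + b * (pv Φ p ⬝ᵥ pv Φ p))
           + u1 ^ 2 * (a * (pu (fun q => pu Φ q ⬝ᵥ pu Φ q) p / 2)
               + b * (pu (fun q => pu Φ q ⬝ᵥ pv Φ q) p
                   - pv (fun q => pu Φ q ⬝ᵥ pu Φ q) p / 2))
           + 2 * u1 * v1 * (a * (pv (fun q => pu Φ q ⬝ᵥ pu Φ q) p / 2)
               + b * (pu (fun q => pv Φ q ⬝ᵥ pv Φ q) p / 2))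
           + v1 ^ 2 * (a * (pv (fun q => pu Φ q ⬝ᵥ pv Φ q) p
                   - pu (fun q => pv Φ q ⬝ᵥ pv Φ q) p / 2)
               + b * (pv (fun q => pv Φ q ⬝ᵥ pv Φ q) p / 2))) := by
  have hPu : Differentiable ℝ (pu Φ) := (contDiff_pu hΦ).differentiable (by simp)
  have hPv : Differentiable ℝ (pv Φ) := (contDiff_pv hΦ).differentiable (by simp)
  have hEu : pu (fun q => pu Φ q ⬝ᵥ pu Φ q) p = 2 * (pu (pu Φ) p ⬝ᵥ pu Φ p) := by
    rw [pu_dot hPu hPu, dotProduct_comm (pu Φ p)]; ring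
  have hEv : pv (fun q => pu Φ q ⬝ᵥ pu Φ q) p = 2 * (pv (pu Φ) p ⬝ᵥ pu Φ p) := by
    rw [pv_dot hPu hPu, dotProduct_comm (pu Φ p)]; ring
  have hGu : pu (fun q => pv Φ q ⬝ᵥ pv Φ q) p = 2 * (pv (pu Φ) p ⬝ᵥ pv Φ p) := by
    rw [pu_dot hPv hPv, dotProduct_comm (pv Φ p), clairaut hΦ]; ring
  have hGv : pv (fun q => pv Φ q ⬝ᵥ pv Φ q) p = 2 * (pv (pv Φ) p ⬝ᵥ pv Φ p) := by
    rw [pv_dot hPv hPv, dotProduct_comm (pv Φ p)]; ring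
  have hFu : pu (fun q => pu Φ q ⬝ᵥ pv Φ q) p
      = pu (pu Φ) p ⬝ᵥ pv Φ p + pv (pu Φ) p ⬝ᵥ pu Φ p := by
    rw [pu_dot hPu hPv, dotProduct_comm (pu Φ p), clairaut hΦ]
  have hFv : pv (fun q => pu Φ q ⬝ᵥ pv Φ q) p
      = pv (pu Φ) p ⬝ᵥ pv Φ p + pv (pv Φ) p ⬝ᵥ pu Φ p := by
    rw [pv_dot hPu hPv, dotProduct_comm (pu Φ p)]
  rw [hEu, hEv, hGu, hGv, hFu, hFv]
  simp only [add_dotProduct, smul_dotProduct, dotProduct_add, dotProduct_smul, smul_eq_mul,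
    dotProduct_comm (pv Φ p) (pu Φ p)]
  ring

theorem homothetic_invariance_of_tangential_component
    (Φ : ℝ × ℝ → Fin 3 → ℝ) (hΦ : ContDiff ℝ (⊤ : ℕ∞) Φ)
    (hreg : ∀ p, crossProduct (pu Φ p) (pv Φ p) ≠ 0)
    (E F G : ℝ × ℝ → ℝ)
    (hE : ∀ p, E p = pu Φ p ⬝ᵥ pu Φ p) (hF : ∀ p, F p = pu Φ p ⬝ᵥ pv Φ p)
    (hG : ∀ p, G p = pv Φ p ⬝ᵥ pv Φ p)
    (Φt : ℝ × ℝ → Fin 3 → ℝ) (hΦt : ContDiff ℝ (⊤ : ℕ∞) Φt)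
    (hregt : ∀ p, crossProduct (pu Φt p) (pv Φt p) ≠ 0)
    (Et Ft Gt : ℝ × ℝ → ℝ)
    (hEt : ∀ p, Et p = pu Φt p ⬝ᵥ pu Φt p) (hFt : ∀ p, Ft p = pu Φt p ⬝ᵥ pv Φt p)
    (hGt : ∀ p, Gt p = pv Φt p ⬝ᵥ pv Φt p)
    (c : ℝ) (hc : c ≠ 0)
    (hcE : ∀ p, Et p = c ^ 2 * E p) (hcF : ∀ p, Ft p = c ^ 2 * F p)
    (hcG : ∀ p, Gt p = c ^ 2 * G p)
    (u v : ℝ → ℝ) (hu : ContDiff ℝ (⊤ : ℕ∞) u) (hv : ContDiff ℝ (⊤ : ℕ∞) v)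
    (σ : ℝ → Fin 3 → ℝ) (hσ : ∀ s, σ s = Φ (u s, v s))
    (hunit : ∀ s, enorm3 (deriv σ s) = 1)
    (κ : ℝ → ℝ) (hκ : ∀ s, κ s = enorm3 (deriv (deriv σ) s)) (hκ0 : ∀ s, κ s ≠ 0)
    (ξ μ : ℝ → ℝ) (hξ : ContDiff ℝ (⊤ : ℕ∞) ξ) (hμ : ContDiff ℝ (⊤ : ℕ∞) μ)
    (hosc : ∀ s, σ s = ξ s • deriv σ s + (μ s / κ s) • deriv (deriv σ) s)
    (σt : ℝ → Fin 3 → ℝ)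
    (hσt : ∀ s, σt s =
      ξ s • (deriv u s • pu Φt (u s, v s) + deriv v s • pv Φt (u s, v s)) +
      (μ s / κ s) •
        (deriv (deriv u) s • pu Φt (u s, v s) + deriv (deriv v) s • pv Φt (u s, v s) +
         (deriv u s) ^ 2 • pu (pu Φt) (u s, v s) +
         (2 * deriv u s * deriv v s) • pv (pu Φt) (u s, v s) +
         (deriv v s) ^ 2 • pv (pv Φt) (u s, v s)))
    :
    ∀ (a b : ℝ) (s : ℝ),
      σt s ⬝ᵥ (a • pu Φt (u s, v s) + b • pv Φt (u s, v s)) =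
          c ^ 2 * (σ s ⬝ᵥ (a • pu Φ (u s, v s) + b • pv Φ (u s, v s))) ∧
        (c = 1 →
          σt s ⬝ᵥ (a • pu Φt (u s, v s) + b • pv Φt (u s, v s)) =
            σ s ⬝ᵥ (a • pu Φ (u s, v s) + b • pv Φ (u s, v s))) := by
  intro a b s
  have hud : Differentiable ℝ u := hu.differentiable (by simp)
  have hvd : Differentiable ℝ v := hv.differentiable (by simp)
  have hΦd : Differentiable ℝ Φ := hΦ.differentiable (by simp)
  have hPud : Differentiable ℝ (pu Φ) := (contDiff_pu hΦ).differentiable (by simp)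
  have hPvd : Differentiable ℝ (pv Φ) := (contDiff_pv hΦ).differentiable (by simp)
  have hPudt : Differentiable ℝ (pu Φt) := (contDiff_pu hΦt).differentiable (by simp)
  have hPvdt : Differentiable ℝ (pv Φt) := (contDiff_pv hΦt).differentiable (by simp)
  have hσfun : σ = fun t => Φ (u t, v t) := funext hσ
  have hd1 : ∀ t, deriv σ t = deriv u t • pu Φ (u t, v t) + deriv v t • pv Φ (u t, v t) := by
    intro t
    rw [hσfun]
    exact (hasDerivAt_comp2 hΦd (hud t) (hvd t)).deriv
  have hu' : Differentiable ℝ (deriv u) :=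
    ((contDiff_infty_iff_deriv.mp (hu.of_le (by simp))).2).differentiable (by simp)
  have hv' : Differentiable ℝ (deriv v) :=
    ((contDiff_infty_iff_deriv.mp (hv.of_le (by simp))).2).differentiable (by simp)
  have hd2 : deriv (deriv σ) s =
      deriv (deriv u) s • pu Φ (u s, v s) + deriv (deriv v) s • pv Φ (u s, v s) +
      (deriv u s) ^ 2 • pu (pu Φ) (u s, v s) +
      (2 * deriv u s * deriv v s) • pv (pu Φ) (u s, v s) +
      (deriv v s) ^ 2 • pv (pv Φ) (u s, v s) := by
    have hfun2 : deriv σ = fun t => deriv u t • pu Φ (u t, v t) + deriv v t • pv Φ (u t, v t) :=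
      funext hd1
    have h1 : HasDerivAt (fun t => deriv u t • pu Φ (u t, v t))
        (deriv u s • (deriv u s • pu (pu Φ) (u s, v s) + deriv v s • pv (pu Φ) (u s, v s)) +
          deriv (deriv u) s • pu Φ (u s, v s)) s :=
      ((hu' s).hasDerivAt).smul (hasDerivAt_comp2 hPud (hud s) (hvd s))
    have h2 : HasDerivAt (fun t => deriv v t • pv Φ (u t, v t))
        (deriv v s • (deriv u s • pu (pv Φ) (u s, v s) + deriv v s • pv (pv Φ) (u s, v s)) +
          deriv (deriv v) s • pv Φ (u s, v s)) s :=
      ((hv' s).hasDerivAt).smul (hasDerivAt_comp2 hPvd (hud s) (hvd s))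
    rw [hfun2, (h1.fun_add h2).deriv, clairaut hΦ]
    module
  have hEdiff : Differentiable ℝ (fun q => pu Φ q ⬝ᵥ pu Φ q) := differentiable_dot hPud hPud
  have hFdiff : Differentiable ℝ (fun q => pu Φ q ⬝ᵥ pv Φ q) := differentiable_dot hPud hPvd
  have hGdiff : Differentiable ℝ (fun q => pv Φ q ⬝ᵥ pv Φ q) := differentiable_dot hPvd hPvd
  have hE2 : pu Φt (u s, v s) ⬝ᵥ pu Φt (u s, v s)
      = c ^ 2 * (pu Φ (u s, v s) ⬝ᵥ pu Φ (u s, v s)) := by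
    rw [← hEt (u s, v s), hcE (u s, v s), hE (u s, v s)]
  have hF2 : pu Φt (u s, v s) ⬝ᵥ pv Φt (u s, v s)
      = c ^ 2 * (pu Φ (u s, v s) ⬝ᵥ pv Φ (u s, v s)) := by
    rw [← hFt (u s, v s), hcF (u s, v s), hF (u s, v s)]
  have hG2 : pv Φt (u s, v s) ⬝ᵥ pv Φt (u s, v s)
      = c ^ 2 * (pv Φ (u s, v s) ⬝ᵥ pv Φ (u s, v s)) := by
    rw [← hGt (u s, v s), hcG (u s, v s), hG (u s, v s)]
  have hEfun : (fun q => pu Φt q ⬝ᵥ pu Φt q) = fun q => c ^ 2 * (pu Φ q ⬝ᵥ pu Φ q) :=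
    funext fun q => by rw [← hEt q, hcE q, hE q]
  have hFfun : (fun q => pu Φt q ⬝ᵥ pv Φt q) = fun q => c ^ 2 * (pu Φ q ⬝ᵥ pv Φ q) :=
    funext fun q => by rw [← hFt q, hcF q, hF q]
  have hGfun : (fun q => pv Φt q ⬝ᵥ pv Φt q) = fun q => c ^ 2 * (pv Φ q ⬝ᵥ pv Φ q) :=
    funext fun q => by rw [← hGt q, hcG q, hG q]
  have main : σt s ⬝ᵥ (a • pu Φt (u s, v s) + b • pv Φt (u s, v s)) =
      c ^ 2 * (σ s ⬝ᵥ (a • pu Φ (u s, v s) + b • pv Φ (u s, v s))) := by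
    rw [hσt s, hosc s, hd1 s, hd2]
    rw [key_expand Φt hΦt (u s, v s) (ξ s) (μ s / κ s) (deriv u s) (deriv v s)
      (deriv (deriv u) s) (deriv (deriv v) s) a b]
    rw [key_expand Φ hΦ (u s, v s) (ξ s) (μ s / κ s) (deriv u s) (deriv v s)
      (deriv (deriv u) s) (deriv (deriv v) s) a b]
    rw [hEfun, hFfun, hGfun,
      pu_const_mul (hEdiff (u s, v s)), pv_const_mul (hEdiff (u s, v s)),
      pu_const_mul (hFdiff (u s, v s)), pv_const_mul (hFdiff (u s, v s)),
      pu_const_mul (hGdiff (u s, v s)), pv_const_mul (hGdiff (u s, v s)),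
      hE2, hF2, hG2]
    ring
  exact ⟨main, fun hc1 => by rw [main, hc1]; ring⟩
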